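/- For every complex s with Re(s) > 1/2, the random Dirichlet series over primes ∑_p f(p) p^{−s} converges almost surely. -/

import Mathlib

/-!
The partial sums of independent, centred, square-integrable random variables form a martingale
whose `L²` norms, hence `L¹` norms, are bounded by the square root of the sum of the variances;
the martingale convergence theorem then gives almost sure convergence (Kolmogorov's criterion).
Rademacher signs are centred with variance at most `1`, so the criterion applies to the real and
imaginary parts of `∑ f(p) p^{-s}` because `∑_p p^{-2 Re s} < ∞` for `Re s > 1/2`. Listing the
primes increasingly turns the sums over primes below `N` into partial sums of a sequence.
-/

open MeasureTheory ProbabilityTheory Filter Finset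
open scoped Topology

namespace ProbabilityTheory

variable {Ω : Type*} [MeasurableSpace Ω] {μ : Measure Ω}

-- With `range n` instead of `range (n + 1)` the increment `X n` would be measurable at time `n`,
-- not independent of it.
theorem iIndepFun.martingale_sum_range_succ {E : Type*} [NormedAddCommGroup E] [NormedSpace ℝ E]
    [CompleteSpace E] [SecondCountableTopology E] [MeasurableSpace E] [BorelSpace E]
    {X : ℕ → Ω → E} (hXm : ∀ n, StronglyMeasurable (X n)) (hindep : iIndepFun X μ)
    (hint : ∀ n, Integrable (X n) μ) (hmean : ∀ n, μ[X n] = 0) :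
    Martingale (fun n => ∑ k ∈ range (n + 1), X k) (Filtration.natural X hXm) μ := by
  have := hindep.isProbabilityMeasure
  refine martingale_of_condExp_sub_eq_zero_nat (fun n => ?_)
    (fun n => integrable_finsetSum' _ fun k _ => hint k) fun n => ?_
  · refine Finset.stronglyMeasurable_sum _ fun k hk => ?_
    exact (Filtration.stronglyAdapted_natural hXm k).mono
      (Filtration.mono _ (Nat.lt_succ_iff.mp (mem_range.mp hk)))
  · simp only [sum_range_succ_sub_sum]
    exact (hindep.condExp_natural_ae_eq_of_lt hXm n.lt_succ_self).trans (by simp only [hmean]; rfl)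

theorem eLpNorm_one_le_ofReal_sqrt_variance [IsProbabilityMeasure μ] {X : Ω → ℝ}
    (hX : MemLp X 2 μ) (hmean : μ[X] = 0) :
    eLpNorm X 1 μ ≤ ENNReal.ofReal √(Var[X; μ]) := by
  calc eLpNorm X 1 μ ≤ eLpNorm X 2 μ := eLpNorm_le_eLpNorm_of_exponent_le one_le_two hX.1
    _ = evariance X μ ^ (1 / 2 : ℝ) := by
      rw [eLpNorm_eq_lintegral_rpow_enorm_toReal two_ne_zero ENNReal.ofNat_ne_top, evariance,
        hmean]
      simp only [ENNReal.toReal_ofNat, sub_zero, ENNReal.rpow_two]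
    _ = ENNReal.ofReal √(Var[X; μ]) := by
      rw [← hX.ofReal_variance_eq, ENNReal.ofReal_rpow_of_nonneg (variance_nonneg _ _)
        (by norm_num), Real.sqrt_eq_rpow]

theorem iIndepFun.ae_exists_tendsto_sum_of_summable_variance {X : ℕ → Ω → ℝ}
    (hXm : ∀ n, Measurable (X n)) (hX : ∀ n, MemLp (X n) 2 μ) (hindep : iIndepFun X μ)
    (hmean : ∀ n, μ[X n] = 0) (hvar : Summable fun n => Var[X n; μ]) :
    ∀ᵐ ω ∂μ, ∃ L, Tendsto (fun N => ∑ k ∈ range N, X k ω) atTop (𝓝 L) := by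
  have := hindep.isProbabilityMeasure
  set S : ℕ → Ω → ℝ := fun n => ∑ k ∈ range (n + 1), X k
  have hS : ∀ n, MemLp (S n) 2 μ := fun n => memLp_finsetSum' _ fun k _ => hX k
  have hS_mean : ∀ n, μ[S n] = 0 := fun n => by
    simp only [S, Finset.sum_apply]
    rw [integral_finsetSum _ fun k _ => (hX k).integrable one_le_two]
    exact sum_eq_zero fun k _ => hmean k
  have hS_var : ∀ n, Var[S n; μ] ≤ ∑' k, Var[X k; μ] := fun n => by
    rw [IndepFun.variance_sum (fun k _ => hX k) fun k _ l _ hkl => hindep.indepFun hkl]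
    exact hvar.sum_le_tsum _ fun k _ => variance_nonneg _ _
  have hS_bdd : ∀ n, eLpNorm (S n) 1 μ ≤ (√(∑' k, Var[X k; μ])).toNNReal := fun n =>
    (eLpNorm_one_le_ofReal_sqrt_variance (hS n) (hS_mean n)).trans <|
      ENNReal.ofReal_le_ofReal (Real.sqrt_le_sqrt (hS_var n))
  have hS_mart := hindep.martingale_sum_range_succ (fun n => (hXm n).stronglyMeasurable)
    (fun n => (hX n).integrable one_le_two) hmean
  filter_upwards [hS_mart.submartingale.exists_ae_tendsto_of_bdd hS_bdd] with ω ⟨L, hL⟩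
  exact ⟨L, (tendsto_add_atTop_iff_nat 1).1 (by simpa [S] using hL)⟩

theorem iIndepFun.ae_exists_tendsto_sum_mul_of_summable {X : ℕ → Ω → ℝ} (a : ℕ → ℂ)
    (hXm : ∀ n, Measurable (X n)) (hX : ∀ n, MemLp (X n) 2 μ) (hindep : iIndepFun X μ)
    (hmean : ∀ n, μ[X n] = 0) (ha : Summable fun n => ‖a n‖ ^ 2 * Var[X n; μ]) :
    ∀ᵐ ω ∂μ, ∃ L : ℂ,
      Tendsto (fun N => ∑ k ∈ range N, (X k ω : ℂ) * a k) atTop (𝓝 L) := by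
  have real_weights : ∀ b : ℕ → ℝ, (∀ n, |b n| ≤ ‖a n‖) →
      ∀ᵐ ω ∂μ, ∃ L,
        Tendsto (fun N => ∑ k ∈ range N, b k * X k ω) atTop (𝓝 L) := by
    intro b hb
    refine iIndepFun.ae_exists_tendsto_sum_of_summable_variance (X := fun n ω => b n * X n ω)
      (fun n => (hXm n).const_mul _) (fun n => (hX n).const_mul _)
      (hindep.comp _ fun n => measurable_const_mul (b n))
      (fun n => by simp [integral_const_mul, hmean])
      (ha.of_nonneg_of_le (fun n => variance_nonneg _ _) fun n => ?_)
    rw [variance_const_mul]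
    exact mul_le_mul_of_nonneg_right (sq_le_sq.2 ((hb n).trans (le_abs_self _)))
      (variance_nonneg _ _)
  filter_upwards [real_weights _ fun n => Complex.abs_re_le_norm (a n),
    real_weights _ fun n => Complex.abs_im_le_norm (a n)] with ω ⟨L₁, h₁⟩ ⟨L₂, h₂⟩
  refine ⟨L₁ + L₂ * Complex.I, ?_⟩
  convert (Complex.continuous_ofReal.tendsto L₁).comp h₁ |>.add
    (((Complex.continuous_ofReal.tendsto L₂).comp h₂).mul_const Complex.I) using 1
  ext N
  apply Complex.ext <;> simp [Complex.re_sum, Complex.im_sum, mul_comm]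

section Rademacher

variable [IsProbabilityMeasure μ] {g : Ω → ℝ}

theorem ae_eq_one_or_eq_neg_one_of_measure_eq_half (hg : Measurable g)
    (h₁ : μ {ω | g ω = 1} = 1 / 2) (h₂ : μ {ω | g ω = -1} = 1 / 2) :
    ∀ᵐ ω ∂μ, g ω = 1 ∨ g ω = -1 := by
  have hdisj : Disjoint {ω | g ω = 1} {ω | g ω = -1} :=
    Set.disjoint_left.2 fun ω (h : g ω = 1) (h' : g ω = -1) => by norm_num [h] at h'
  have hA : MeasurableSet {ω | g ω = 1} := hg (measurableSet_singleton 1)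
  have hB : MeasurableSet {ω | g ω = -1} := hg (measurableSet_singleton (-1))
  refine (ae_iff_measure_eq (p := fun ω => g ω = 1 ∨ g ω = -1) ?_).2 ?_ <;> rw [Set.ofPred_or]
  · exact (hA.union hB).nullMeasurableSet
  · rw [measure_union hdisj hB, h₁, h₂, ENNReal.add_halves, measure_univ]

theorem integral_eq_zero_of_measure_eq_half (hg : Measurable g)
    (h₁ : μ {ω | g ω = 1} = 1 / 2) (h₂ : μ {ω | g ω = -1} = 1 / 2) : μ[g] = 0 := by
  have hA : MeasurableSet {ω | g ω = 1} := hg (measurableSet_singleton 1)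
  have hB : MeasurableSet {ω | g ω = -1} := hg (measurableSet_singleton (-1))
  have hg_eq :
      g =ᵐ[μ] fun ω => {ω | g ω = 1}.indicator 1 ω - {ω | g ω = -1}.indicator 1 ω := by
    filter_upwards [ae_eq_one_or_eq_neg_one_of_measure_eq_half hg h₁ h₂] with ω hω
    rcases hω with h | h <;> norm_num [Set.indicator_apply, h]
  rw [integral_congr_ae hg_eq, integral_sub ((integrable_const 1).indicator hA)
    ((integrable_const 1).indicator hB)]
  simp [integral_indicator_one hA, integral_indicator_one hB, measureReal_def, h₁, h₂]

end Rademacher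

end ProbabilityTheory

theorem Nat.sum_filter_range_eq_sum_range_count {M : Type*} [AddCommMonoid M] (p : ℕ → Prop)
    [DecidablePred p] (F : ℕ → M) (N : ℕ) :
    ∑ n ∈ range N with p n, F n = ∑ k ∈ range (Nat.count p N), F (Nat.nth p k) := by
  induction N with
  | zero => simp
  | succ N ih =>
    rw [range_add_one, filter_insert, Nat.count_succ]
    by_cases hN : p N
    · rw [if_pos hN, if_pos hN, sum_insert (by simp), ih, sum_range_succ, Nat.nth_count hN,
        add_comm]
    · simp [hN, ih]

theorem Nat.injective_nth_prime :
    Function.Injective fun k => (⟨Nat.nth Nat.Prime k, Nat.prime_nth_prime k⟩ : Nat.Primes) :=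
  fun _ _ h => Nat.nth_injective Nat.infinite_setOfPred_prime (congrArg Subtype.val h)

theorem summable_norm_inv_nth_prime_cpow_sq {s : ℂ} (hs : 1 / 2 < s.re) :
    Summable fun k => ‖((Nat.nth Nat.Prime k : ℂ) ^ s)⁻¹‖ ^ 2 := by
  have hsum : Summable fun p : Nat.Primes => (p : ℝ) ^ (-(2 * s.re)) :=
    Nat.Primes.summable_rpow.2 (by linarith)
  refine (hsum.comp_injective Nat.injective_nth_prime).congr fun k => ?_
  have hpos := (Nat.prime_nth_prime k).pos
  change (Nat.nth Nat.Prime k : ℝ) ^ (-(2 * s.re)) = _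
  simp only [norm_inv, Complex.norm_natCast_cpow_of_pos hpos, inv_pow,
    ← Real.rpow_mul_natCast (Nat.cast_nonneg _), Real.rpow_neg (Nat.cast_nonneg _)]
  norm_num [mul_comm]

/-- For every complex `s` with `Re(s) > 1/2`, the random Dirichlet series over primes
`∑_p f(p) p^{-s}` converges almost surely. -/
theorem prime_dirichlet_series_converges
    {Ω : Type*} [MeasurableSpace Ω] (μ : Measure Ω) [IsProbabilityMeasure μ]
    (f : ℕ → Ω → ℝ)
    (hmeas : ∀ n : ℕ, Measurable (f n))
    (hindep : iIndepFun
      (fun p : Nat.Primes => f p) μ)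
    (hrad : ∀ p : ℕ, p.Prime →
      μ {ω | f p ω = 1} = 1/2 ∧ μ {ω | f p ω = -1} = 1/2) :
    ∀ s : ℂ, 1/2 < s.re →
      ∀ᵐ ω ∂μ, ∃ L : ℂ,
        Tendsto (fun N : ℕ => ∑ p ∈ Finset.filter Nat.Prime (Finset.range N),
          (f p ω : ℂ) / (p : ℂ) ^ s) atTop (nhds L) := by
  intro s hs
  set X : ℕ → Ω → ℝ := fun k => f (Nat.nth Nat.Prime k)
  have hsign k := hrad _ (Nat.prime_nth_prime k)
  have hX_bdd : ∀ k, ∀ᵐ ω ∂μ, X k ω ∈ Set.Icc (-1) 1 := fun k => by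
    filter_upwards [ae_eq_one_or_eq_neg_one_of_measure_eq_half (hmeas _) (hsign k).1 (hsign k).2]
      with ω hω
    rcases hω with h | h <;> simp [X, h]
  have hX : ∀ k, MemLp (X k) 2 μ := fun k =>
    MemLp.of_bound (hmeas _).aestronglyMeasurable 1 <| by
      filter_upwards [hX_bdd k] with ω hω using abs_le.2 hω
  have hvar : ∀ k, Var[X k; μ] ≤ 1 := fun k => by
    simpa using variance_le_sq_of_bounded (hX_bdd k) (hmeas _).aemeasurable
  have hconv := (hindep.precomp Nat.injective_nth_prime).ae_exists_tendsto_sum_mul_of_summable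
    (fun k => ((Nat.nth Nat.Prime k : ℂ) ^ s)⁻¹) (fun k => hmeas _) hX
    (fun k => integral_eq_zero_of_measure_eq_half (hmeas _) (hsign k).1 (hsign k).2)
    ((summable_norm_inv_nth_prime_cpow_sq hs).of_nonneg_of_le
      (fun k => mul_nonneg (sq_nonneg _) (variance_nonneg _ _))
      fun k => mul_le_of_le_one_right (sq_nonneg _) (hvar k))
  filter_upwards [hconv] with ω ⟨L, hL⟩
  refine ⟨L, (hL.comp Nat.tendsto_primeCounting').congr fun N => ?_⟩
  simp only [Function.comp_apply, Nat.primeCounting', Nat.sum_filter_range_eq_sum_range_count,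
    div_eq_mul_inv]
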